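/- arXiv:2201.05588 — 4 statements merged into one kernel-verified Lean document; each statement's English description precedes it below -/
import Mathlib

section
/- Let x_1, ..., x_n be vectors in R^d with sum equal to the zero vector and each of infinity norm at most 1. Then there exists a permutation π of {1,...,n} such that for every i in {1,...,n}, the infinity norm of the sum x_{π(1)} + ... + x_{π(i)} is at most d. -/
/-- A Petri net over places `P` and transitions `T`, given by pre/post arc weights. -/
structure PetriNet (P T : Type) where
  pre : T → P → ℕ
  post : T → P → ℕ

namespace PetriNet

variable {P T : Type}

/-- Transition `t` is enabled in marking `m`. -/
def Enabled (N : PetriNet P T) (m : P → ℕ) (t : T) : Prop := ∀ p, N.pre t p ≤ m p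

/-- Firing transition `t` in `m` yields `m'`. -/
def Fire (N : PetriNet P T) (m : P → ℕ) (t : T) (m' : P → ℕ) : Prop :=
  N.Enabled m t ∧ ∀ p, m' p = m p - N.pre t p + N.post t p

def Step (N : PetriNet P T) (m m' : P → ℕ) : Prop := ∃ t, N.Fire m t m'

/-- Reachability `m →* m'`. -/
def Reach (N : PetriNet P T) : (P → ℕ) → (P → ℕ) → Prop := Relation.ReflTransGen N.Step

/-- Effect of a transition, as an integer vector. -/
def eff (N : PetriNet P T) (t : T) (p : P) : ℤ := (N.post t p : ℤ) - (N.pre t p : ℤ)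

def ZStep (N : PetriNet P T) (m m' : P → ℤ) : Prop := ∃ t, ∀ p, m' p = m p + N.eff t p

/-- Z-reachability: no enabledness constraint, markings range over ℤ. -/
def ZReach (N : PetriNet P T) : (P → ℤ) → (P → ℤ) → Prop := Relation.ReflTransGen N.ZStep

/-- Maximal arc weight `‖T‖`. -/
def maxW (N : PetriNet P T) [Fintype P] [Fintype T] : ℕ :=
  Finset.univ.sup fun t => Finset.univ.sup fun p => max (N.pre t p) (N.post t p)

/-- Edge relation of the underlying graph, on `P ⊕ T`. -/
def Edge (N : PetriNet P T) : (P ⊕ T) → (P ⊕ T) → Prop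
  | Sum.inl p, Sum.inr t => 0 < N.pre t p
  | Sum.inr t, Sum.inl p => 0 < N.post t p
  | _, _ => False

/-- `N` is bounded from marking `m`. -/
def BoundedFrom (N : PetriNet P T) (m : P → ℕ) : Prop :=
  ∃ b : ℕ, ∀ m', N.Reach m m' → ∀ p, m' p ≤ b

/-- `N` is cyclic from marking `m`. -/
def CyclicFrom (N : PetriNet P T) (m : P → ℕ) : Prop :=
  ∀ m', N.Reach m m' → N.Reach m' m

/-- Transition `t` is quasi-live from `m`. -/
def QuasiLiveT (N : PetriNet P T) (m : P → ℕ) (t : T) : Prop :=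
  ∃ m', N.Reach m m' ∧ N.Enabled m' t

/-- `N` is quasi-live from `m`. -/
def QuasiLiveFrom (N : PetriNet P T) (m : P → ℕ) : Prop :=
  ∀ t, N.QuasiLiveT m t

/-- Transition `t` is live from `m`. -/
def LiveT (N : PetriNet P T) (m : P → ℕ) (t : T) : Prop :=
  ∀ m', N.Reach m m' → N.QuasiLiveT m' t

end PetriNet

/-- A workflow net: a Petri net with initial place `ini`, final place `fin`,
no production into `ini`, no consumption from `fin`, and every node on a path
from `ini` to `fin` in the underlying graph. -/
structure WorkflowNet (P T : Type) extends PetriNet P T where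
  ini : P
  fin : P
  ini_ne_fin : ini ≠ fin
  no_prod_ini : ∀ t, post t ini = 0
  no_cons_fin : ∀ t, pre t fin = 0
  on_path : ∀ v : P ⊕ T,
    Relation.ReflTransGen toPetriNet.Edge (Sum.inl ini) v ∧
    Relation.ReflTransGen toPetriNet.Edge v (Sum.inl fin)

namespace WorkflowNet

variable {P T : Type}

/-- The marking `{i : k}`. -/
def iniM [DecidableEq P] (N : WorkflowNet P T) (k : ℕ) : P → ℕ :=
  fun p => if p = N.ini then k else 0

/-- The marking `{f : k}`. -/
def finM [DecidableEq P] (N : WorkflowNet P T) (k : ℕ) : P → ℕ :=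
  fun p => if p = N.fin then k else 0

/-- `N` is `k`-sound. -/
def KSound [DecidableEq P] (N : WorkflowNet P T) (k : ℕ) : Prop :=
  ∀ m, N.toPetriNet.Reach (N.iniM k) m → N.toPetriNet.Reach m (N.finM k)

/-- `N` is generalised sound. -/
def GeneralisedSound [DecidableEq P] (N : WorkflowNet P T) : Prop :=
  ∀ k : ℕ, 1 ≤ k → N.KSound k

/-- `N` is structurally sound. -/
def StructurallySound [DecidableEq P] (N : WorkflowNet P T) : Prop :=
  ∃ k : ℕ, 1 ≤ k ∧ N.KSound k

/-- All places of `N` are nonredundant. -/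
def Nonredundant [DecidableEq P] (N : WorkflowNet P T) : Prop :=
  ∀ p : P, ∃ (k : ℕ) (m : P → ℕ), N.toPetriNet.Reach (N.iniM k) m ∧ 0 < m p

/-- `N` is strongly `k`-sound. -/
def StronglyKSound [DecidableEq P] (N : WorkflowNet P T) (k : ℕ) : Prop :=
  ∀ m : P → ℕ,
    N.toPetriNet.ZReach (fun p => ((N.iniM k) p : ℤ)) (fun p => (m p : ℤ)) →
    N.toPetriNet.Reach m (N.finM k)

end WorkflowNet

/-!
Grinberg–Sevastyanov. For a set `A` of indices let `polytope x A s` be the set of weights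
`μ ∈ [0, 1]^A` with `∑ μ i = s` and `∑ μ i • x i = 0`. If `#A = s + d + 1` and the polytope for
`s + 1` is nonempty, scaling by `s / (s + 1)` gives a point of the one for `s`; a point of it with
fewest fractional coordinates is a vertex, so it has at most `d + 1` of them, and counting then
yields a coordinate `μ i = 0`: the polytope of `A \ {i}` and `s` is nonempty. Start from all `n`
vectors with the uniform weight `(n - d) / n`, remove vectors one at a time, and list them in the
reverse order of removal. Every prefix `A` of size `s + d` carries a weight `μ`, whence
`‖∑_A x‖ = ‖∑_A (1 - μ i) • x i‖ ≤ #A - s = d`; shorter prefixes are bounded trivially. The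
argument works for any norm on a `d`-dimensional space.
-/

open Finset Module

namespace Steinitz

section Polytope

variable {ι E : Type*} [AddCommGroup E] [Module ℝ E] {x : ι → E}

theorem exists_affine_dependence_of_finrank_succ_lt_card [FiniteDimensional ℝ E] {F : Finset ι}
    (hF : finrank ℝ E + 1 < #F) :
    ∃ v : ι → ℝ, (∀ i ∉ F, v i = 0) ∧ ∑ i ∈ F, v i = 0 ∧ ∑ i ∈ F, v i • x i = 0 ∧
      ∃ i ∈ F, v i ≠ 0 := by
  classical
  have hdep : ¬LinearIndependent ℝ fun i : F => (x i, (1 : ℝ)) := fun h => by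
    have := h.fintype_card_le_finrank
    simp only [Fintype.card_coe, finrank_prod, finrank_self] at this
    omega
  obtain ⟨g, hg, i₀, hi₀⟩ := Fintype.not_linearIndependent_iff.1 hdep
  set v : ι → ℝ := fun i => if h : i ∈ F then g ⟨i, h⟩ else 0
  have hv (i : F) : v i = g i := dif_pos i.2
  refine ⟨v, fun i hi => dif_neg hi, ?_, ?_, i₀, i₀.2, by rwa [hv]⟩
  · simpa [← sum_coe_sort F, hv, Prod.snd_sum] using congrArg Prod.snd hg
  · simpa [← sum_coe_sort F, hv, Prod.fst_sum] using congrArg Prod.fst hg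

theorem exists_add_mul_mem_Icc_and_eq_zero_or_eq_one {F : Finset ι} {μ v : ι → ℝ}
    (hμ : ∀ i ∈ F, μ i ∈ Set.Icc 0 1) (hv : ∃ i ∈ F, v i ≠ 0) :
    ∃ t : ℝ, (∀ i ∈ F, μ i + t * v i ∈ Set.Icc 0 1) ∧
      ∃ i ∈ F, μ i + t * v i = 0 ∨ μ i + t * v i = 1 := by
  -- `μ i + t * v i` runs from `μ i` into the end `b i` of `[0, 1]` at time `e i`
  set b : ι → ℝ := fun i => if 0 < v i then 1 else 0
  set e : ι → ℝ := fun i => (b i - μ i) / v i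
  have he_mul (i : ι) (hi : v i ≠ 0) : μ i + e i * v i = b i := by
    rw [div_mul_cancel₀ _ hi]; ring
  have he_nonneg (i : ι) (hi : i ∈ F) : 0 ≤ e i := by
    obtain ⟨h0, h1⟩ := hμ i hi
    by_cases hpos : 0 < v i
    · exact div_nonneg (by simp [b, hpos, h1]) hpos.le
    · exact div_nonneg_of_nonpos (by simp [b, hpos, h0]) (not_lt.1 hpos)
  obtain ⟨i₀, hi₀, hmin⟩ := exists_min_image {i ∈ F | v i ≠ 0} e
    (by simpa [Finset.Nonempty] using hv)
  rw [mem_filter] at hi₀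
  refine ⟨e i₀, fun i hi => ?_, i₀, hi₀.1, ?_⟩
  · obtain ⟨h0, h1⟩ := hμ i hi
    rcases eq_or_ne (v i) 0 with hvi | hvi
    · simpa [hvi] using hμ i hi
    have hle : e i₀ ≤ e i := hmin i (mem_filter.2 ⟨hi, hvi⟩)
    have hb := he_mul i hvi
    have ht := he_nonneg i₀ hi₀.1
    by_cases hpos : 0 < v i
    · simp only [b, if_pos hpos] at hb
      constructor <;> nlinarith
    · simp only [b, if_neg hpos] at hb
      constructor <;> nlinarith
  · rw [he_mul i₀ hi₀.2]
    by_cases hpos : 0 < v i₀ <;> simp [b, hpos]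

variable (x) in
def polytope (A : Finset ι) (s : ℝ) : Set (ι → ℝ) :=
  {μ | (∀ i ∈ A, μ i ∈ Set.Icc 0 1) ∧ ∑ i ∈ A, μ i = s ∧ ∑ i ∈ A, μ i • x i = 0}

theorem exists_mem_polytope_card_fractional_le [FiniteDimensional ℝ E] {A : Finset ι} {s : ℝ}
    (h : (polytope x A s).Nonempty) :
    ∃ μ ∈ polytope x A s, #{i ∈ A | μ i ∈ Set.Ioo 0 1} ≤ finrank ℝ E + 1 := by
  obtain ⟨μ, ⟨hμ, hμs, hμx⟩, hmin⟩ :=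
    (measure fun μ : ι → ℝ => #{i ∈ A | μ i ∈ Set.Ioo 0 1}).wf.has_min _ h
  refine ⟨μ, ⟨hμ, hμs, hμx⟩, not_lt.1 fun hlt => ?_⟩
  set F := {i ∈ A | μ i ∈ Set.Ioo 0 1}
  have hFA : F ⊆ A := filter_subset _ _
  obtain ⟨v, hvF, hv, hvx, hv0⟩ := exists_affine_dependence_of_finrank_succ_lt_card (x := x) hlt
  obtain ⟨t, hbox, i₀, hi₀, hb⟩ := exists_add_mul_mem_Icc_and_eq_zero_or_eq_one
    (fun i hi => Set.Ioo_subset_Icc_self (mem_filter.1 hi).2) hv0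
  have hfix (i : ι) (hi : i ∉ F) : μ i + t * v i = μ i := by simp [hvF i hi]
  have hvA (f : ι → E) : ∑ i ∈ A, v i • f i = ∑ i ∈ F, v i • f i :=
    (sum_subset hFA fun i _ hi => by simp [hvF i hi]).symm
  -- moving along `v` stays in the polytope and makes the coordinate `i₀` integral
  refine hmin (fun i => μ i + t * v i) ⟨fun i hi => ?_, ?_, ?_⟩ ?_
  · by_cases hiF : i ∈ F
    · exact hbox i hiF
    · show μ i + t * v i ∈ _
      rw [hfix i hiF]; exact hμ i hi
  · rw [sum_add_distrib, ← mul_sum, ← sum_subset hFA (fun i _ hi => hvF i hi), hv, hμs]; simp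
  · simp_rw [add_smul, mul_smul, sum_add_distrib, ← smul_sum, hvA, hvx, hμx]; simp
  · show #{i ∈ A | μ i + t * v i ∈ Set.Ioo 0 1} < #F
    refine card_lt_card ((ssubset_iff_of_subset fun i hi => ?_).2 ⟨i₀, hi₀, ?_⟩)
    · by_contra hiF
      rw [mem_filter, hfix i hiF] at hi
      exact hiF (mem_filter.2 hi)
    · rw [mem_filter, Set.mem_Ioo]
      rcases hb with hb | hb <;> simp [hb]

theorem exists_mem_polytope_eq_zero [FiniteDimensional ℝ E] {A : Finset ι} {s : ℕ}
    (hA : #A = s + finrank ℝ E + 1) (h : (polytope x A s).Nonempty) :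
    ∃ μ ∈ polytope x A s, ∃ i ∈ A, μ i = 0 := by
  obtain ⟨μ, hμ, hF⟩ := exists_mem_polytope_card_fractional_le h
  refine ⟨μ, hμ, ?_⟩
  by_contra! hpos
  have hμpos (i : ι) (hi : i ∈ A) : 0 < μ i := (hμ.1 i hi).1.lt_of_ne' (hpos i hi)
  set F := {i ∈ A | μ i ∈ Set.Ioo 0 1}
  have hone (i : ι) (hi : i ∈ A) (hiF : i ∉ F) : 1 - μ i = 0 := by
    simp only [F, mem_filter, Set.mem_Ioo, not_and, not_lt] at hiF
    linarith [hiF hi (hμpos i hi), (hμ.1 i hi).2]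
  -- the deficits `1 - μ i < 1` add up to `finrank ℝ E + 1` on at most that many coordinates
  have hsum : ∑ i ∈ F, (1 - μ i) = finrank ℝ E + 1 := by
    rw [sum_subset (filter_subset _ A) hone, sum_sub_distrib, hμ.2.1, sum_const, hA]
    ring
  have hFne : F.Nonempty := nonempty_iff_ne_empty.2 fun hF0 => by
    rw [hF0, sum_empty] at hsum; linarith
  have hlt : ∑ i ∈ F, (1 - μ i) < ∑ i ∈ F, 1 := sum_lt_sum_of_nonempty hFne fun i hi => by
    linarith [hμpos i (filter_subset _ A hi)]
  rw [hsum, sum_const, nsmul_one] at hlt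
  exact absurd (by exact_mod_cast hF) (not_le.2 hlt)

theorem smul_mem_polytope {A : Finset ι} {s c : ℝ} {μ : ι → ℝ} (hμ : μ ∈ polytope x A s)
    (hc : c ∈ Set.Icc (0 : ℝ) 1) : c • μ ∈ polytope x A (c * s) := by
  obtain ⟨hbox, hsum, hzero⟩ := hμ
  refine ⟨fun i hi => ?_, ?_, ?_⟩
  · exact ⟨mul_nonneg hc.1 (hbox i hi).1, mul_le_one₀ hc.2 (hbox i hi).1 (hbox i hi).2⟩
  · simp [← mul_sum, hsum]
  · simp [mul_smul, ← smul_sum, hzero]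

theorem mem_polytope_erase [DecidableEq ι] {A : Finset ι} {s : ℝ} {μ : ι → ℝ}
    (hμ : μ ∈ polytope x A s) {i : ι} (hi : μ i = 0) : μ ∈ polytope x (A.erase i) s := by
  obtain ⟨hbox, hsum, hzero⟩ := hμ
  exact ⟨fun j hj => hbox j (mem_of_mem_erase hj), by rwa [sum_erase _ hi],
    by rwa [sum_erase _ (by simp [hi])]⟩

theorem exists_polytope_erase_nonempty [DecidableEq ι] [FiniteDimensional ℝ E] {A : Finset ι}
    {s : ℕ} (hA : #A = s + finrank ℝ E + 1) (h : (polytope x A (s + 1)).Nonempty) :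
    ∃ i ∈ A, (polytope x (A.erase i) s).Nonempty := by
  obtain ⟨μ, hμ⟩ := h
  have hc : (s / (s + 1) : ℝ) ∈ Set.Icc 0 1 :=
    ⟨by positivity, div_le_one_of_le₀ (by linarith) (by positivity)⟩
  have hμ' := smul_mem_polytope hμ hc
  rw [div_mul_cancel₀ _ (by positivity)] at hμ'
  obtain ⟨ν, hν, i, hi, hνi⟩ := exists_mem_polytope_eq_zero hA ⟨_, hμ'⟩
  exact ⟨i, hi, ν, mem_polytope_erase hν hνi⟩

end Polytope

section Normed

variable {ι E : Type*} [NormedAddCommGroup E] {x : ι → E}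

theorem norm_sum_take_le_of_length_le (hx : ∀ i, ‖x i‖ ≤ 1) {L : List ι} {m : ℕ}
    (hL : L.length ≤ m) (k : ℕ) : ‖((L.take k).map x).sum‖ ≤ m := by
  calc ‖((L.take k).map x).sum‖ ≤ ((L.take k).map fun i => ‖x i‖).sum := by
        simpa [List.map_map, Function.comp_def] using
          norm_multiset_sum_le ((L.take k).map x : Multiset E)
    _ ≤ ((L.take k).map fun i => ‖x i‖).length • (1 : ℝ) :=
        List.sum_le_card_nsmul _ _ fun r hr => by
          obtain ⟨i, -, rfl⟩ := List.mem_map.1 hr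
          exact hx i
    _ ≤ m := by
        rw [nsmul_one, Nat.cast_le, List.length_map, List.length_take]
        exact (min_le_right _ _).trans hL

variable [NormedSpace ℝ E]

theorem norm_sum_le_card_sub_of_mem_polytope {A : Finset ι} {s : ℝ} {μ : ι → ℝ}
    (hμ : μ ∈ polytope x A s) (hx : ∀ i ∈ A, ‖x i‖ ≤ 1) : ‖∑ i ∈ A, x i‖ ≤ #A - s := by
  have hsum : ∑ i ∈ A, x i = ∑ i ∈ A, (1 - μ i) • x i := by
    simp [sub_smul, sum_sub_distrib, hμ.2.2]
  calc ‖∑ i ∈ A, x i‖ = ‖∑ i ∈ A, (1 - μ i) • x i‖ := by rw [hsum]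
    _ ≤ ∑ i ∈ A, (1 - μ i) := norm_sum_le_of_le A fun i hi => by
      have hμi := hμ.1 i hi
      rw [norm_smul, Real.norm_of_nonneg (by linarith [hμi.2])]
      exact mul_le_of_le_one_right (by linarith [hμi.2]) (hx i hi)
    _ = #A - s := by simp [sum_sub_distrib, hμ.2.1]

variable [FiniteDimensional ℝ E] [DecidableEq ι]

theorem exists_list_of_polytope_nonempty (hx : ∀ i, ‖x i‖ ≤ 1) {s : ℕ} {A : Finset ι}
    (hA : #A = s + finrank ℝ E) (hP : (polytope x A s).Nonempty) :
    ∃ L : List ι, L.Nodup ∧ L.toFinset = A ∧ ∀ k, ‖((L.take k).map x).sum‖ ≤ finrank ℝ E := by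
  induction s generalizing A with
  | zero =>
    exact ⟨A.toList, A.nodup_toList, A.toList_toFinset,
      norm_sum_take_le_of_length_le hx (by simp [hA])⟩
  | succ s ih =>
    rw [Nat.cast_succ] at hP
    obtain ⟨i, hi, hP'⟩ := exists_polytope_erase_nonempty (by omega) hP
    obtain ⟨L, hnd, hL, hpre⟩ := ih (by rw [card_erase_of_mem hi]; omega) hP'
    have hiL : i ∉ L := by simp [← List.mem_toFinset, hL]
    have hnd' : (L ++ [i]).Nodup := List.concat_eq_append .. ▸ hnd.concat hiL
    have hLA : (L ++ [i]).toFinset = A := by simp [hL, insert_erase hi]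
    refine ⟨L ++ [i], hnd', hLA, fun k => ?_⟩
    rcases le_or_gt k L.length with hk | hk
    · rw [List.take_append_of_le_length hk]
      exact hpre k
    · obtain ⟨μ, hμ⟩ := hP
      have hfull := norm_sum_le_card_sub_of_mem_polytope hμ fun i _ => hx i
      rw [List.take_of_length_le (by simp; omega), ← List.sum_toFinset _ hnd', hLA]
      rw [hA] at hfull
      push_cast at hfull
      linarith

theorem exists_list_of_sum_eq_zero (hx : ∀ i, ‖x i‖ ≤ 1) {A : Finset ι}
    (hA : ∑ i ∈ A, x i = 0) :
    ∃ L : List ι, L.Nodup ∧ L.toFinset = A ∧ ∀ k, ‖((L.take k).map x).sum‖ ≤ finrank ℝ E := by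
  by_cases hcard : #A ≤ finrank ℝ E
  · exact ⟨A.toList, A.nodup_toList, A.toList_toFinset,
      norm_sum_take_le_of_length_le hx (by simpa using hcard)⟩
  obtain ⟨s, hs⟩ : ∃ s, #A = s + finrank ℝ E := ⟨#A - finrank ℝ E, by omega⟩
  have hA0 : (0 : ℝ) < #A := by exact_mod_cast (by omega : 0 < #A)
  refine exists_list_of_polytope_nonempty hx hs
    ⟨fun _ => s / #A, fun i _ => ⟨by positivity, ?_⟩, ?_, ?_⟩
  · exact div_le_one_of_le₀ (by exact_mod_cast (by omega : s ≤ #A)) hA0.le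
  · simp [sum_const, nsmul_eq_mul, mul_div_cancel₀ _ hA0.ne']
  · simp [← smul_sum, hA]

end Normed

end Steinitz

theorem List.exists_perm_ofFn_eq {n : ℕ} {L : List (Fin n)} (hnd : L.Nodup)
    (hL : L.toFinset = univ) : ∃ π : Equiv.Perm (Fin n), List.ofFn π = L := by
  have hlen : L.length = n := by
    rw [← List.toFinset_card_of_nodup hnd, hL, card_univ, Fintype.card_fin]
  refine ⟨(finCongr hlen.symm).trans (hnd.getEquivOfForallMemList L fun a => ?_), ?_⟩
  · simp [← List.mem_toFinset, hL]
  · exact List.ext_getElem (by simp [hlen]) (by simp)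

theorem Fin.sum_Iic_eq_sum_take_ofFn {M : Type*} [AddCommMonoid M] {n : ℕ} (f : Fin n → M)
    (i : Fin n) : ∑ k ∈ Iic i, f k = ((List.ofFn f).take (i + 1)).sum := by
  rw [List.sum_take_ofFn]
  refine Finset.sum_congr (Finset.ext fun k => ?_) fun _ _ => rfl
  simp only [Finset.mem_Iic, Finset.mem_filter, Finset.mem_univ, true_and]
  omega

/-- The Steinitz Lemma. -/
theorem steinitz_lemma (d n : ℕ) (x : Fin n → Fin d → ℝ)
    (hsum : ∑ i, x i = 0) (hnorm : ∀ i j, |x i j| ≤ 1) :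
    ∃ π : Equiv.Perm (Fin n), ∀ i : Fin n, ∀ j : Fin d,
      |∑ k ∈ Finset.Iic i, x (π k) j| ≤ (d : ℝ) := by
  have hx (i : Fin n) : ‖x i‖ ≤ 1 := (pi_norm_le_iff_of_nonneg zero_le_one).2 fun j => hnorm i j
  obtain ⟨L, hnd, hL, hprefix⟩ := Steinitz.exists_list_of_sum_eq_zero hx hsum
  obtain ⟨π, rfl⟩ := List.exists_perm_ofFn_eq hnd hL
  refine ⟨π, fun i j => ?_⟩
  have hbound := hprefix (i + 1)
  rw [Module.finrank_fin_fun, List.map_take, List.map_ofFn,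
    ← Fin.sum_Iic_eq_sum_take_ofFn] at hbound
  calc |∑ k ∈ Iic i, x (π k) j| = ‖(∑ k ∈ Iic i, x (π k)) j‖ := by simp [Finset.sum_apply]
    _ ≤ ‖∑ k ∈ Iic i, x (π k)‖ := norm_le_pi_norm _ j
    _ ≤ d := hbound
end

section
/- Let x_0, x_1, ..., x_n be vectors in Z^d, let b be the maximum infinity norm of the x_j, and let z = x_0 + x_1 + ... + x_n. Then there exists a permutation π of {0,...,n} with π(0) = 0 and rational numbers 0 ≤ c_0 ≤ c_1 ≤ ... ≤ c_n such that for every i in {0,...,n}, the infinity norm of (x_{π(0)} + ... + x_{π(i)}) - c_i · z is at most b(d+2). -/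
/-!
Append `n + 1` copies of `r = -z / (n + 1)` to the family `x`. The enlarged family sums to zero,
so by the Steinitz lemma it can be ordered with every prefix sum of norm at most `d b`; moving
`x 0` to the front costs at most `b` more. The prefix ending at the `i`-th of the `x`'s is then
`x (π 0) + ⋯ + x (π i) - c i • z`, where `(n + 1) c i` counts the copies of `r` placed before it,
so `c` is nondecreasing.

The Steinitz lemma is proved by the Grinberg–Sevastyanov argument, building the order from the
back. Call `A` good if `balancedWeights v A (#A - d)` is nonempty, i.e. there are weights
`λ ∈ [0, 1]^A` with `∑ λ = #A - d` and `∑ λ a • v a = 0`; then `∑_A v = ∑ (1 - λ a) • v a` has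
norm at most `d b`. A good `A` with `#A > d` has an element whose removal leaves a good set:
rescale `λ` to total weight `#A - 1 - d` and pass to a point of that weight polytope with at most
`d + 1` fractional coordinates, which is forced to have a zero coordinate.
-/

open Finset Module

/-- For `m ∈ (0, 1)` and `g ≠ 0`, the time `t > 0` at which `m + t g` reaches `0` or `1`. -/
noncomputable def exitTime (m g : ℝ) : ℝ := if 0 < g then (1 - m) / g else -m / g

theorem exitTime_pos {m g : ℝ} (hm : m ∈ Set.Ioo 0 1) (hg : g ≠ 0) : 0 < exitTime m g := by
  unfold exitTime
  split_ifs with h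
  · exact div_pos (by linarith [hm.2]) h
  · exact div_pos_of_neg_of_neg (by linarith [hm.1]) (lt_of_le_of_ne (not_lt.mp h) hg)

theorem add_mul_mem_Icc_of_le_exitTime {m g t : ℝ} (hm : m ∈ Set.Ioo 0 1) (ht₀ : 0 ≤ t)
    (ht : t ≤ exitTime m g) : m + t * g ∈ Set.Icc 0 1 := by
  obtain ⟨hm₀, hm₁⟩ := hm
  unfold exitTime at ht
  rcases lt_trichotomy g 0 with hg | rfl | hg
  · rw [if_neg hg.not_gt, le_div_iff_of_neg hg] at ht
    constructor <;> nlinarith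
  · simp [hm₀.le, hm₁.le]
  · rw [if_pos hg, le_div_iff₀ hg] at ht
    constructor <;> nlinarith

theorem add_exitTime_mul_notMem_Ioo {m g : ℝ} (hg : g ≠ 0) :
    m + exitTime m g * g ∉ Set.Ioo 0 1 := by
  unfold exitTime
  split_ifs <;> field_simp <;> simp

theorem exists_add_mul_mem_Icc_notMem_Ioo {ι : Type*} {F : Finset ι} {μ g : ι → ℝ}
    (hμ : ∀ i ∈ F, μ i ∈ Set.Ioo 0 1) (hg : ∃ i ∈ F, g i ≠ 0) :
    ∃ t : ℝ, (∀ i ∈ F, μ i + t * g i ∈ Set.Icc 0 1) ∧ ∃ i ∈ F, μ i + t * g i ∉ Set.Ioo 0 1 := by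
  classical
  obtain ⟨i, hi, hmin⟩ := (F.filter (g · ≠ 0)).exists_min_image (fun j => exitTime (μ j) (g j))
    (by simpa [Finset.Nonempty] using hg)
  rw [mem_filter] at hi
  refine ⟨exitTime (μ i) (g i), fun j hj => ?_, i, hi.1, add_exitTime_mul_notMem_Ioo hi.2⟩
  by_cases hgj : g j = 0
  · simpa [hgj] using Set.Ioo_subset_Icc_self (hμ j hj)
  · exact add_mul_mem_Icc_of_le_exitTime (hμ j hj) (exitTime_pos (hμ i hi.1) hi.2).le
      (hmin j (mem_filter.mpr ⟨hj, hgj⟩))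

namespace List

variable {α β : Type*}

def lefts (l : List (α ⊕ β)) : List α := l.filterMap Sum.getLeft?

/-- `rightsBefore l i` is the number of right entries of `l` preceding its `i`-th left entry. -/
def rightsBefore : List (α ⊕ β) → ℕ → ℕ
  | [], _ => 0
  | Sum.inl _ :: _, 0 => 0
  | Sum.inl _ :: l, i + 1 => rightsBefore l i
  | Sum.inr _ :: l, i => rightsBefore l i + 1

@[simp] theorem lefts_nil : lefts ([] : List (α ⊕ β)) = [] := rfl

@[simp] theorem lefts_cons_inl (a : α) (l : List (α ⊕ β)) :
    lefts (Sum.inl a :: l) = a :: lefts l := rfl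

@[simp] theorem lefts_cons_inr (b : β) (l : List (α ⊕ β)) :
    lefts (Sum.inr b :: l) = lefts l := rfl

theorem mem_lefts {l : List (α ⊕ β)} {a : α} : a ∈ lefts l ↔ Sum.inl a ∈ l := by
  simp [lefts]

theorem Nodup.lefts {l : List (α ⊕ β)} (hl : l.Nodup) : l.lefts.Nodup :=
  hl.filterMap fun _ _ _ h h' => by
    rw [Option.mem_def, Sum.getLeft?_eq_some_iff] at h h'
    rw [h, h']

theorem monotone_rightsBefore : ∀ l : List (α ⊕ β), Monotone (rightsBefore l)
  | [] => monotone_const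
  | Sum.inl _ :: l => fun i j hij => by
    cases i with
    | zero => exact Nat.zero_le _
    | succ i =>
      obtain ⟨j, rfl⟩ := Nat.exists_eq_add_of_lt hij
      exact monotone_rightsBefore l (by omega)
  | Sum.inr _ :: l => fun _ _ hij => Nat.succ_le_succ (monotone_rightsBefore l hij)

theorem exists_sum_take_eq {M : Type*} [AddCommMonoid M] (f : α → M) (r : M) :
    ∀ (l : List (α ⊕ β)) (i : ℕ), i < l.lefts.length →
      ∃ k, ((l.take k).map (Sum.elim f fun _ => r)).sum =
        ((l.lefts.take (i + 1)).map f).sum + rightsBefore l i • r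
  | [], _, hi => absurd hi (Nat.not_lt_zero _)
  | Sum.inl a :: l, 0, _ => ⟨1, by simp [rightsBefore]⟩
  | Sum.inl a :: l, i + 1, hi => by
    obtain ⟨k, hk⟩ := exists_sum_take_eq f r l i (by simpa using hi)
    refine ⟨k + 1, ?_⟩
    rw [take_succ_cons, map_cons, sum_cons, hk, lefts_cons_inl, take_succ_cons, map_cons,
      sum_cons, add_assoc]
    rfl
  | Sum.inr b :: l, i, hi => by
    obtain ⟨k, hk⟩ := exists_sum_take_eq f r l i (by simpa using hi)
    refine ⟨k + 1, ?_⟩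
    rw [take_succ_cons, map_cons, sum_cons, hk, lefts_cons_inr, Sum.elim_inr, rightsBefore,
      succ_nsmul]
    abel

theorem Nodup.exists_perm_ofFn_eq {m : ℕ} {l : List (Fin m)} (hl : l.Nodup) (hc : ∀ a, a ∈ l) :
    ∃ π : Equiv.Perm (Fin m), ofFn π = l := by
  have hlen : l.length = m := by simpa using Fintype.card_congr (hl.getEquivOfForallMemList l hc)
  refine ⟨(finCongr hlen.symm).trans (hl.getEquivOfForallMemList l hc),
    ext_getElem (by simp [hlen]) fun i _ _ => ?_⟩
  simp [List.Nodup.getEquivOfForallMemList]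

end List

section ListSums

variable {ι E : Type*} [SeminormedAddCommGroup E] {v : ι → E}

theorem norm_sum_map_le {l : List ι} {B : ℝ} (h : ∀ i ∈ l, ‖v i‖ ≤ B) :
    ‖(l.map v).sum‖ ≤ l.length * B := by
  induction l with
  | nil => simp
  | cons a l ih =>
    rw [List.map_cons, List.sum_cons, List.length_cons, Nat.cast_succ]
    have ha := h a List.mem_cons_self
    have hl := ih fun i hi => h i (List.mem_cons_of_mem a hi)
    linarith [norm_add_le (v a) (l.map v).sum]

theorem norm_sum_take_cons_erase_le [DecidableEq ι] {L : List ι} {a : ι} (ha : a ∈ L) {B C : ℝ}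
    (hB : ‖v a‖ ≤ B) (hL : ∀ k, ‖((L.take k).map v).sum‖ ≤ C) (k : ℕ) :
    ‖(((a :: L.erase a).take k).map v).sum‖ ≤ C + B := by
  have hB₀ : 0 ≤ B := (norm_nonneg _).trans hB
  obtain ⟨L₁, L₂, haL₁, rfl, herase⟩ := List.exists_erase_eq ha
  rw [herase]
  cases k with
  | zero => simpa using (norm_nonneg _).trans ((hL 0).trans (le_add_of_nonneg_right hB₀))
  | succ k =>
    rw [List.take_succ_cons]
    rcases le_or_gt k L₁.length with hk | hk
    · have := hL k
      rw [List.take_append_of_le_length hk] at this ⊢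
      rw [List.map_cons, List.sum_cons, add_comm C]
      exact (norm_add_le _ _).trans (add_le_add hB this)
    · have hperm : (a :: (L₁ ++ L₂).take k).Perm ((L₁ ++ a :: L₂).take (k + 1)) := by
        rw [List.take_append, List.take_append, List.take_of_length_le hk.le,
          List.take_of_length_le (l := L₁) (by omega), Nat.sub_add_comm hk.le, List.take_succ_cons]
        exact List.perm_middle.symm
      rw [(hperm.map v).sum_eq]
      linarith [hL (k + 1)]

theorem exists_perm_norm_sum_Iic_add_nsmul_le {n : ℕ} {β : Type*} (f : Fin (n + 1) → E) (r : E)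
    {C : ℝ} {L : List (Fin (n + 1) ⊕ β)} (hnd : (Sum.inl 0 :: L).Nodup)
    (hc : ∀ a, Sum.inl a ∈ Sum.inl 0 :: L)
    (hL : ∀ k, ‖(((Sum.inl 0 :: L).take k).map (Sum.elim f fun _ => r)).sum‖ ≤ C) :
    ∃ π : Equiv.Perm (Fin (n + 1)), π 0 = 0 ∧ ∃ m : ℕ → ℕ, Monotone m ∧
      ∀ i : Fin (n + 1), ‖∑ k ∈ Iic i, f (π k) + m i • r‖ ≤ C := by
  obtain ⟨π, hπ⟩ := hnd.lefts.exists_perm_ofFn_eq fun a => List.mem_lefts.mpr (hc a)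
  refine ⟨π, ?_, _, List.monotone_rightsBefore (Sum.inl 0 :: L), fun i => ?_⟩
  · simpa using congrArg List.head? hπ
  · have hi : (i : ℕ) < (Sum.inl 0 :: L).lefts.length := by
      rw [← hπ, List.length_ofFn]
      exact i.2
    obtain ⟨k, hk⟩ := List.exists_sum_take_eq f r _ _ hi
    have hIic : (univ.filter fun j : Fin (n + 1) => (j : ℕ) < i + 1) = Iic i := by
      ext j
      simp only [mem_filter, mem_univ, true_and, mem_Iic, Nat.lt_succ_iff, Fin.le_iff_val_le_val]
    rw [← hπ, List.map_take (f := f), List.map_ofFn, List.sum_take_ofFn, hIic] at hk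
    exact hk ▸ hL k

end ListSums

section Steinitz

variable {ι V : Type*} [NormedAddCommGroup V] [NormedSpace ℝ V]

theorem exists_affine_relation_of_finrank_succ_lt_card [FiniteDimensional ℝ V] (v : ι → V)
    {F : Finset ι} (h : finrank ℝ V + 1 < #F) :
    ∃ g : ι → ℝ, (∀ i ∉ F, g i = 0) ∧ ∑ i ∈ F, g i = 0 ∧ ∑ i ∈ F, g i • v i = 0 ∧
      ∃ i ∈ F, g i ≠ 0 := by
  classical
  have hdep : ¬ LinearIndepOn ℝ (fun i => ((1 : ℝ), v i)) (F : Set ι) := fun hli => by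
    have := hli.linearIndependent.fintype_card_le_finrank
    simp only [Finset.coe_sort_coe, Fintype.card_coe, finrank_prod, finrank_self] at this
    omega
  simp only [linearIndepOn_finset_iff, not_forall] at hdep
  obtain ⟨g, hg, i, hi, hgi⟩ := hdep
  obtain ⟨hsum, hrel⟩ := Prod.ext_iff.mp hg
  simp only [Prod.smul_mk, smul_eq_mul, mul_one, Prod.fst_sum, Prod.snd_sum, Prod.fst_zero,
    Prod.snd_zero] at hsum hrel
  refine ⟨fun j => if j ∈ F then g j else 0, fun j hj => if_neg hj, ?_, ?_, i, hi, by simpa [hi]⟩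
  · rw [← hsum]; exact sum_congr rfl fun j hj => if_pos hj
  · rw [← hrel]; exact sum_congr rfl fun j hj => by simp only [if_pos hj]

noncomputable def balancedWeights (v : ι → V) (A : Finset ι) (s : ℝ) : Set (ι → ℝ) :=
  {μ | (∀ i ∈ A, μ i ∈ Set.Icc 0 1) ∧ ∑ i ∈ A, μ i = s ∧ ∑ i ∈ A, μ i • v i = 0}

noncomputable def fractionalCoords (A : Finset ι) (μ : ι → ℝ) : Finset ι :=
  {i ∈ A | μ i ∈ Set.Ioo 0 1}

variable {v : ι → V} {A : Finset ι} {s : ℝ} {μ : ι → ℝ}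

theorem fractionalCoords_subset : fractionalCoords A μ ⊆ A := filter_subset _ _

theorem smul_mem_balancedWeights {q : ℝ} (hq₀ : 0 ≤ q) (hq₁ : q ≤ 1)
    (hμ : μ ∈ balancedWeights v A s) : q • μ ∈ balancedWeights v A (q * s) := by
  obtain ⟨hbox, hsum, hrel⟩ := hμ
  refine ⟨fun i hi => ⟨?_, ?_⟩, ?_, ?_⟩
  · exact mul_nonneg hq₀ (hbox i hi).1
  · exact mul_le_one₀ hq₁ (hbox i hi).1 (hbox i hi).2
  · simp [← mul_sum, hsum]
  · simp [mul_smul, ← smul_sum, hrel]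

theorem balancedWeights_nonempty_of_le {t : ℝ} (hμ : μ ∈ balancedWeights v A s) (ht₀ : 0 ≤ t)
    (hts : t ≤ s) : (balancedWeights v A t).Nonempty := by
  have hs : 0 ≤ s := ht₀.trans hts
  have hq : t / s * s = t := by
    rcases hs.eq_or_lt with rfl | hs
    · simp [le_antisymm hts ht₀]
    · exact div_mul_cancel₀ t hs.ne'
  exact ⟨_, hq ▸ smul_mem_balancedWeights (div_nonneg ht₀ hs) (div_le_one_of_le₀ hts hs) hμ⟩

theorem mem_balancedWeights_erase [DecidableEq ι] {i : ι} (hμi : μ i = 0)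
    (hμ : μ ∈ balancedWeights v A s) : μ ∈ balancedWeights v (A.erase i) s := by
  obtain ⟨hbox, hsum, hrel⟩ := hμ
  refine ⟨fun j hj => hbox j (mem_of_mem_erase hj), ?_, ?_⟩
  · rw [sum_erase _ hμi, hsum]
  · rw [sum_erase _ (by rw [hμi, zero_smul]), hrel]

theorem norm_sum_le_of_mem_balancedWeights {B : ℝ} (hv : ∀ i ∈ A, ‖v i‖ ≤ B)
    (hμ : μ ∈ balancedWeights v A (#A - finrank ℝ V)) :
    ‖∑ i ∈ A, v i‖ ≤ finrank ℝ V * B := by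
  obtain ⟨hbox, hsum, hrel⟩ := hμ
  have hv' : ∑ i ∈ A, v i = ∑ i ∈ A, (1 - μ i) • v i := by
    simp [sub_smul, sum_sub_distrib, hrel]
  calc ‖∑ i ∈ A, v i‖ ≤ ∑ i ∈ A, (1 - μ i) * B := by
        rw [hv']
        refine (norm_sum_le _ _).trans (sum_le_sum fun i hi => ?_)
        have h1 : 0 ≤ 1 - μ i := by linarith [(hbox i hi).2]
        rw [norm_smul, Real.norm_of_nonneg h1]
        exact mul_le_mul_of_nonneg_left (hv i hi) h1
    _ = finrank ℝ V * B := by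
        rw [← sum_mul, sum_sub_distrib, hsum, sum_const, nsmul_one]
        ring

variable [FiniteDimensional ℝ V]

theorem exists_card_fractionalCoords_lt (hμ : μ ∈ balancedWeights v A s)
    (h : finrank ℝ V + 1 < #(fractionalCoords A μ)) :
    ∃ μ' ∈ balancedWeights v A s, #(fractionalCoords A μ') < #(fractionalCoords A μ) := by
  classical
  obtain ⟨hbox, hsum, hrel⟩ := hμ
  set F := fractionalCoords A μ
  have hFA : F ⊆ A := fractionalCoords_subset
  -- move along an affine relation of the fractional coordinates until one of them hits 0 or 1
  obtain ⟨g, hgF, hg, hgv, hg0⟩ := exists_affine_relation_of_finrank_succ_lt_card v h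
  obtain ⟨t, htbox, i, hiF, hit⟩ :=
    exists_add_mul_mem_Icc_notMem_Ioo (fun i hi => (mem_filter.mp hi).2) hg0
  have hsumA : ∑ i ∈ A, g i = 0 := by
    rw [← sum_subset hFA fun i _ hi => hgF i hi, hg]
  have hrelA : ∑ i ∈ A, g i • v i = 0 := by
    rw [← sum_subset hFA fun i _ hi => by rw [hgF i hi, zero_smul], hgv]
  refine ⟨μ + t • g, ⟨fun j hj => ?_, ?_, ?_⟩, card_lt_card ?_⟩
  · by_cases hjF : j ∈ F
    · exact htbox j hjF
    · simpa [hgF j hjF] using hbox j hj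
  · simp [sum_add_distrib, ← mul_sum, hsum, hsumA]
  · simp [add_smul, sum_add_distrib, mul_smul, ← smul_sum, hrel, hrelA]
  · refine (ssubset_iff_of_subset fun j hj => ?_).mpr ⟨i, hiF, fun hi' => hit ?_⟩
    · by_contra hjF
      simp only [fractionalCoords, mem_filter, Pi.add_apply, Pi.smul_apply, hgF j hjF,
        smul_zero, add_zero] at hj
      exact hjF (mem_filter.mpr hj)
    · simpa using (mem_filter.mp hi').2

theorem exists_card_fractionalCoords_le (hμ : μ ∈ balancedWeights v A s) :
    ∃ μ' ∈ balancedWeights v A s, #(fractionalCoords A μ') ≤ finrank ℝ V + 1 := by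
  induction hk : #(fractionalCoords A μ) using Nat.strong_induction_on generalizing μ with
  | _ k ih =>
    by_cases h : finrank ℝ V + 1 < k
    · obtain ⟨μ', hμ', hlt⟩ := exists_card_fractionalCoords_lt hμ (hk ▸ h)
      exact ih _ (hk ▸ hlt) hμ' rfl
    · exact ⟨μ, hμ, by omega⟩

theorem exists_mem_balancedWeights_eq_zero
    (hμ : μ ∈ balancedWeights v A (#A - 1 - finrank ℝ V)) :
    ∃ μ' ∈ balancedWeights v A (#A - 1 - finrank ℝ V), ∃ i ∈ A, μ' i = 0 := by
  obtain ⟨μ', hμ', hcard⟩ := exists_card_fractionalCoords_le hμ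
  refine ⟨μ', hμ', ?_⟩
  -- without a zero coordinate, `∑ (1 - μ' i) = d + 1` would be carried by at most `d + 1`
  -- fractional coordinates, each contributing less than `1`
  by_contra! hne
  set F := fractionalCoords A μ'
  have hone : ∀ i ∈ A, i ∉ F → 1 - μ' i = 0 := fun i hi hiF => by
    have hIoo : μ' i ∉ Set.Ioo 0 1 := fun h => hiF (mem_filter.mpr ⟨hi, h⟩)
    obtain ⟨h0, h1⟩ := hμ'.1 i hi
    simp only [Set.mem_Ioo, not_and, not_lt] at hIoo
    linarith [hIoo (lt_of_le_of_ne h0 (hne i hi).symm)]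
  have hsum : ∑ i ∈ F, (1 - μ' i) = finrank ℝ V + 1 := by
    rw [sum_subset fractionalCoords_subset hone, sum_sub_distrib, hμ'.2.1, sum_const, nsmul_one]
    ring
  rcases F.eq_empty_or_nonempty with hF | hF
  · rw [hF, sum_empty] at hsum
    linarith
  · have hlt : ∑ i ∈ F, (1 - μ' i) < ∑ i ∈ F, (1 : ℝ) :=
      sum_lt_sum_of_nonempty hF fun i hi => by linarith [(mem_filter.mp hi).2.1]
    have : (#F : ℝ) ≤ finrank ℝ V + 1 := by exact_mod_cast hcard
    rw [sum_const, nsmul_one] at hlt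
    linarith

theorem exists_erase_balancedWeights_nonempty [DecidableEq ι] (hA : finrank ℝ V < #A)
    (h : (balancedWeights v A (#A - finrank ℝ V)).Nonempty) :
    ∃ i ∈ A, (balancedWeights v (A.erase i) (#(A.erase i) - finrank ℝ V)).Nonempty := by
  obtain ⟨μ, hμ⟩ := h
  have hd : (finrank ℝ V : ℝ) + 1 ≤ #A := by exact_mod_cast hA
  obtain ⟨μ₁, hμ₁⟩ := balancedWeights_nonempty_of_le hμ (t := #A - 1 - finrank ℝ V)
    (by linarith) (by linarith)
  obtain ⟨μ', hμ', i, hi, hμ'i⟩ := exists_mem_balancedWeights_eq_zero hμ₁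
  refine ⟨i, hi, μ', ?_⟩
  rw [card_erase_of_mem hi, Nat.cast_sub (by omega), Nat.cast_one]
  exact mem_balancedWeights_erase hμ'i hμ'

theorem exists_list_norm_sum_take_le_of_balancedWeights [DecidableEq ι] {B : ℝ} (hB : 0 ≤ B)
    (hv : ∀ i, ‖v i‖ ≤ B) (A : Finset ι)
    (hA : finrank ℝ V < #A → (balancedWeights v A (#A - finrank ℝ V)).Nonempty) :
    ∃ L : List ι, L.Nodup ∧ L.toFinset = A ∧
      ∀ k, ‖((L.take k).map v).sum‖ ≤ finrank ℝ V * B := by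
  induction A using Finset.strongInduction with
  | _ A ih =>
  by_cases hc : finrank ℝ V < #A
  · obtain ⟨i, hi, hne⟩ := exists_erase_balancedWeights_nonempty hc (hA hc)
    obtain ⟨L, hnd, hL, hbd⟩ := ih _ (erase_ssubset hi) fun _ => hne
    have hiL : i ∉ L := by simp [← List.mem_toFinset, hL]
    have hnd' : (L ++ [i]).Nodup := hnd.append (List.nodup_singleton i) (by simpa using hiL)
    have hL' : (L ++ [i]).toFinset = A := by simp [hL, insert_erase hi]
    refine ⟨L ++ [i], hnd', hL', fun k => ?_⟩
    rcases le_or_gt k L.length with hk | hk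
    · rw [List.take_append_of_le_length hk]
      exact hbd k
    · obtain ⟨μ, hμ⟩ := hA hc
      rw [List.take_of_length_le (by simp; omega), ← List.sum_toFinset _ hnd', hL']
      exact norm_sum_le_of_mem_balancedWeights (fun i _ => hv i) hμ
  · refine ⟨A.toList, A.nodup_toList, A.toList_toFinset, fun k => ?_⟩
    calc _ ≤ (A.toList.take k).length * B := norm_sum_map_le fun i _ => hv i
      _ ≤ finrank ℝ V * B := by gcongr; simp; omega

theorem exists_list_norm_sum_take_le [Fintype ι] {B : ℝ} (hB : 0 ≤ B)
    (hv : ∀ i, ‖v i‖ ≤ B) (hsum : ∑ i, v i = 0) :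
    ∃ L : List ι, L.Nodup ∧ (∀ i, i ∈ L) ∧
      ∀ k, ‖((L.take k).map v).sum‖ ≤ finrank ℝ V * B := by
  classical
  have h1 : (1 : ι → ℝ) ∈ balancedWeights v univ #(univ : Finset ι) :=
    ⟨fun i _ => by simp, by simp, by simpa using hsum⟩
  obtain ⟨L, hnd, hL, hbd⟩ := exists_list_norm_sum_take_le_of_balancedWeights hB hv univ fun hc =>
    balancedWeights_nonempty_of_le h1 (sub_nonneg.mpr (mod_cast hc.le))
      (sub_le_self _ (Nat.cast_nonneg _))
  exact ⟨L, hnd, fun i => by simp [← List.mem_toFinset, hL], hbd⟩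

theorem exists_list_cons_norm_sum_take_le [Fintype ι] {B : ℝ} (hB : 0 ≤ B)
    (hv : ∀ i, ‖v i‖ ≤ B) (hsum : ∑ i, v i = 0) (a : ι) :
    ∃ L : List ι, (a :: L).Nodup ∧ (∀ i, i ∈ a :: L) ∧
      ∀ k, ‖(((a :: L).take k).map v).sum‖ ≤ (finrank ℝ V + 1) * B := by
  classical
  obtain ⟨L, hnd, hL, hbd⟩ := exists_list_norm_sum_take_le hB hv hsum
  have hperm := List.perm_cons_erase (hL a)
  refine ⟨L.erase a, hperm.nodup_iff.mp hnd, fun i => hperm.subset (hL i), fun k => ?_⟩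
  rw [add_one_mul]
  exact norm_sum_take_cons_erase_le (hL a) (hv a) hbd k

theorem exists_perm_norm_sum_Iic_sub_smul_sum_le {n : ℕ} (x : Fin (n + 1) → V) {B : ℝ}
    (hx : ∀ i, ‖x i‖ ≤ B) :
    ∃ π : Equiv.Perm (Fin (n + 1)), π 0 = 0 ∧
      ∃ c : Fin (n + 1) → ℚ, 0 ≤ c 0 ∧ Monotone c ∧
        ∀ i, ‖∑ k ∈ Iic i, x (π k) - (c i : ℝ) • ∑ j, x j‖ ≤ (finrank ℝ V + 1) * B := by
  classical
  set r : V := -((n : ℝ) + 1)⁻¹ • ∑ j, x j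
  have hB : 0 ≤ B := (norm_nonneg _).trans (hx 0)
  have hr : ‖r‖ ≤ B := by
    have : ‖∑ j, x j‖ ≤ (n + 1) * B := by simpa using norm_sum_le_of_le univ fun j _ => hx j
    rw [norm_smul, norm_neg, norm_inv, Real.norm_of_nonneg (by positivity),
      inv_mul_le_iff₀ (by positivity)]
    exact this
  have hsum : ∑ s, Sum.elim x (fun _ : Fin (n + 1) => r) s = 0 := by
    simp [r, Fintype.sum_sum_type, ← Nat.cast_smul_eq_nsmul ℝ, smul_smul,
      mul_inv_cancel₀ (Nat.cast_add_one_ne_zero (R := ℝ) n)]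
  obtain ⟨L, hnd, hc, hL⟩ := exists_list_cons_norm_sum_take_le hB
    (fun s => Sum.rec hx (fun _ => hr) s) hsum (Sum.inl 0)
  obtain ⟨π, hπ0, m, hm, hπm⟩ := exists_perm_norm_sum_Iic_add_nsmul_le x r hnd (fun a => hc _) hL
  refine ⟨π, hπ0, fun i => m i / ((n : ℚ) + 1), by positivity,
    fun i j hij => div_le_div_of_nonneg_right (Nat.cast_le.mpr (hm hij)) (by positivity),
    fun i => ?_⟩
  have hri : ((m i / ((n : ℚ) + 1) : ℚ) : ℝ) • ∑ j, x j = -(m i • r) := by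
    simp [r, ← Nat.cast_smul_eq_nsmul ℝ, smul_smul, div_eq_mul_inv]
  rw [hri, sub_neg_eq_add]
  exact hπm i

end Steinitz

/-- The extended Steinitz Lemma. -/
theorem extended_steinitz (d n : ℕ) (x : Fin (n + 1) → Fin d → ℤ) (b : ℕ)
    (hb : ∀ i j, |x i j| ≤ (b : ℤ)) (z : Fin d → ℤ) (hz : z = ∑ j, x j) :
    ∃ π : Equiv.Perm (Fin (n + 1)), π 0 = 0 ∧
      ∃ c : Fin (n + 1) → ℚ, 0 ≤ c 0 ∧ Monotone c ∧
        ∀ i : Fin (n + 1), ∀ j : Fin d,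
          |(∑ k ∈ Finset.Iic i, (x (π k) j : ℚ)) - c i * (z j : ℚ)| ≤
            (b : ℚ) * ((d : ℚ) + 2) := by
  set X : Fin (n + 1) → Fin d → ℝ := fun i j => x i j
  have hX : ∀ i, ‖X i‖ ≤ b := fun i =>
    (pi_norm_le_iff_of_nonneg (Nat.cast_nonneg b)).mpr fun j => by
      simpa [X, Real.norm_eq_abs, ← Int.cast_abs] using (Int.cast_le (R := ℝ)).mpr (hb i j)
  obtain ⟨π, hπ0, c, hc0, hc, hbound⟩ := exists_perm_norm_sum_Iic_sub_smul_sum_le X hX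
  refine ⟨π, hπ0, c, hc0, hc, fun i j => ?_⟩
  rw [finrank_fin_fun] at hbound
  have hcoord := (norm_le_pi_norm _ j).trans (hbound i)
  have key : ((∑ k ∈ Iic i, (x (π k) j : ℚ) - c i * z j : ℚ) : ℝ) =
      (∑ k ∈ Iic i, X (π k) - (c i : ℝ) • ∑ m, X m) j := by
    simp [X, hz, Finset.sum_apply]
  rw [← Rat.cast_le (K := ℝ), Rat.cast_abs, key]
  calc _ ≤ ((d : ℝ) + 1) * b := by simpa [Real.norm_eq_abs] using hcoord
    _ ≤ _ := by push_cast; nlinarith [(b.cast_nonneg : (0 : ℝ) ≤ b)]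
end

section
/- Let N be a workflow net. The set S(N) = {k ≥ 1 : N is k-sound} is closed under subtraction with positive result: if g, k ∈ S(N) and g > k, then g - k ∈ S(N). -/
/-!
Split `{i : g}` as `{i : g - k} + {i : k}`. Along any run from `{i : g - k}` to `m` the extra
`k` tokens in `i` sit idle, and `k`-soundness moves them to `f`; `g`-soundness then takes
`m + {f : k}` to `{f : g}`. Since no transition consumes from `f`, the `k` tokens there stay
inert during that last run, and cancelling them gives `m →* {f : g - k}`.
-/

namespace PetriNet

variable {P T : Type} (N : PetriNet P T)

theorem Step.add_right {m m' : P → ℕ} (c : P → ℕ) (h : N.Step m m') :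
    N.Step (m + c) (m' + c) := by
  obtain ⟨t, hen, hfire⟩ := h
  refine ⟨t, fun p => (hen p).trans (Nat.le_add_right _ _), fun p => ?_⟩
  have := hen p
  simp only [Pi.add_apply, hfire p]
  omega

theorem Reach.add_right {m m' : P → ℕ} (c : P → ℕ) (h : N.Reach m m') :
    N.Reach (m + c) (m' + c) :=
  h.lift (· + c) fun _ _ => Step.add_right N c

theorem Reach.add_left {m m' : P → ℕ} (c : P → ℕ) (h : N.Reach m m') :
    N.Reach (c + m) (c + m') := by
  simpa only [add_comm c] using Reach.add_right N c h

theorem Step.of_add_right {c m m'' : P → ℕ} (hc : ∀ t p, c p ≠ 0 → N.pre t p = 0)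
    (h : N.Step (m + c) m'') : ∃ m', m'' = m' + c ∧ N.Step m m' := by
  obtain ⟨t, hen, hfire⟩ := h
  have hen' : N.Enabled m t := fun p => by
    by_cases hcp : c p = 0
    · simpa [hcp] using hen p
    · simp [hc t p hcp]
  refine ⟨fun p => m p - N.pre t p + N.post t p, funext fun p => ?_, t, hen', fun _ => rfl⟩
  have := hen' p
  simp only [Pi.add_apply, hfire p]
  omega

theorem Reach.of_add_right {c m m'' : P → ℕ} (hc : ∀ t p, c p ≠ 0 → N.pre t p = 0)
    (h : N.Reach (m + c) m'') : ∃ m', m'' = m' + c ∧ N.Reach m m' := by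
  induction h with
  | refl => exact ⟨m, rfl, .refl⟩
  | tail _ hstep ih =>
    obtain ⟨m', rfl, hreach⟩ := ih
    obtain ⟨m'', rfl, hstep'⟩ := Step.of_add_right N hc hstep
    exact ⟨m'', rfl, hreach.tail hstep'⟩

end PetriNet

namespace WorkflowNet

variable {P T : Type} [DecidableEq P] (N : WorkflowNet P T)

theorem iniM_add (a b : ℕ) : N.iniM (a + b) = N.iniM a + N.iniM b := by
  funext p
  simp only [iniM, Pi.add_apply]
  split_ifs <;> rfl

theorem finM_add (a b : ℕ) : N.finM (a + b) = N.finM a + N.finM b := by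
  funext p
  simp only [finM, Pi.add_apply]
  split_ifs <;> rfl

theorem pre_eq_zero_of_finM_ne_zero {k : ℕ} (t : T) (p : P) (hp : N.finM k p ≠ 0) :
    N.pre t p = 0 := by
  by_cases h : p = N.fin
  · exact h ▸ N.no_cons_fin t
  · simp [finM, h] at hp

end WorkflowNet

theorem sound_numbers_sub_closed_general {P T : Type} [DecidableEq P]
    (N : WorkflowNet P T) (g k : ℕ)
    (hgs : N.KSound g) (hks : N.KSound k) (hgt : k < g) :
    N.KSound (g - k) := by
  intro m hm
  have hg : g - k + k = g := Nat.sub_add_cancel hgt.le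
  have hini : N.toPetriNet.Reach (N.iniM g) (m + N.iniM k) := by
    rw [← hg, N.iniM_add]
    exact hm.add_right _ (N.iniM k)
  have hfin : N.toPetriNet.Reach (m + N.iniM k) (m + N.finM k) :=
    (hks _ .refl).add_left _ m
  obtain ⟨m', hm', hreach⟩ :=
    (hgs _ (hini.trans hfin)).of_add_right _ N.pre_eq_zero_of_finM_ne_zero
  rw [← hg, N.finM_add, add_left_inj] at hm'
  rwa [hm']

/-- The set of sound numbers is closed under subtraction with positive result. -/
theorem sound_numbers_sub_closed {P T : Type} [DecidableEq P]
    (N : WorkflowNet P T) (g k : ℕ) (hg : 1 ≤ g) (hk : 1 ≤ k)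
    (hgs : N.KSound g) (hks : N.KSound k) (hgt : k < g) :
    N.KSound (g - k) :=
  sound_numbers_sub_closed_general N g k hgs hks hgt
end

section
/- Given a workflow net N and k > 0, the workflow net N' obtained by adding a fresh initial place i', a fresh final place o', a transition t_i consuming one token from i' and producing k tokens in the old initial place i, and a transition t_o consuming k tokens from the old final place o and producing one token in o', satisfies: for every c > 0, N is (c·k)-sound if and only if N' is c-sound. -/
section Scale

variable {P T : Type} [DecidableEq P]

/-- Pre-flow of the `k`-rescaled workflow net. -/
def scalePre (N : WorkflowNet P T) (k : ℕ) : (T ⊕ Bool) → (P ⊕ Bool) → ℕ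
  | Sum.inl t, Sum.inl p => N.pre t p
  | Sum.inl _, Sum.inr _ => 0
  | Sum.inr false, Sum.inr false => 1          -- t_i consumes one token from i'
  | Sum.inr false, _ => 0
  | Sum.inr true, Sum.inl p => if p = N.fin then k else 0  -- t_o consumes k from o
  | Sum.inr true, Sum.inr _ => 0

/-- Post-flow of the `k`-rescaled workflow net. -/
def scalePost (N : WorkflowNet P T) (k : ℕ) : (T ⊕ Bool) → (P ⊕ Bool) → ℕ
  | Sum.inl t, Sum.inl p => N.post t p
  | Sum.inl _, Sum.inr _ => 0
  | Sum.inr false, Sum.inl p => if p = N.ini then k else 0  -- t_i produces k in i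
  | Sum.inr false, Sum.inr _ => 0
  | Sum.inr true, Sum.inr true => 1            -- t_o produces one token in o'
  | Sum.inr true, _ => 0

end Scale

namespace PetriNet

variable {P T : Type}

theorem Reach.exists_eq_add_of_unconsumed {N : PetriNet P T} {m d M : P → ℕ}
    (hd : ∀ t p, 0 < d p → N.pre t p = 0) (h : N.Reach (m + d) M) :
    ∃ m', M = m' + d ∧ N.Reach m m' := by
  induction h with
  | refl => exact ⟨m, rfl, .refl⟩
  | tail _ step ih =>
    obtain ⟨m', rfl, hm'⟩ := ih
    obtain ⟨t, hen, hfire⟩ := step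
    have hpre : ∀ p, N.pre t p ≤ m' p := fun p => by
      have := hen p; have := hd t p; simp only [Pi.add_apply] at *; omega
    refine ⟨fun p => m' p - N.pre t p + N.post t p, funext fun p => ?_,
      hm'.tail ⟨t, hpre, fun _ => rfl⟩⟩
    have := hfire p; have := hd t p; have := hpre p; simp only [Pi.add_apply] at *; omega

end PetriNet

theorem Pi.le_and_eq_single_sub_of_single_eq_add {ι : Type*} [DecidableEq ι] {i : ι}
    {x y : ℕ} {m : ι → ℕ} (h : Pi.single i x = m + Pi.single i y) :
    y ≤ x ∧ m = Pi.single i (x - y) := by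
  have hi := congrFun h i
  simp only [Pi.single_eq_same, Pi.add_apply] at hi
  refine ⟨by omega, funext fun p => ?_⟩
  have hp := congrFun h p
  rcases eq_or_ne p i with rfl | hpi
  · simp only [Pi.single_eq_same]; omega
  · simpa [Pi.single_eq_of_ne hpi] using hp.symm

namespace WorkflowNet

variable {P T : Type} [DecidableEq P] (N : WorkflowNet P T)

theorem iniM_eq_single (k : ℕ) : N.iniM k = Pi.single N.ini k := by
  funext p; simp [iniM, Pi.single_apply]

theorem finM_eq_single (k : ℕ) : N.finM k = Pi.single N.fin k := by
  funext p; simp [finM, Pi.single_apply]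

end WorkflowNet

section ScaleNet

variable {P T : Type}

/-- The marking with `m` on `P`, `a` tokens on `i'` and `b` tokens on `o'`. -/
def scaleMarking (m : P → ℕ) (a b : ℕ) : P ⊕ Bool → ℕ
  | .inl p => m p
  | .inr false => a
  | .inr true => b

theorem scaleMarking_eta (M : P ⊕ Bool → ℕ) :
    M = scaleMarking (M ∘ Sum.inl) (M (.inr false)) (M (.inr true)) := by
  funext x; rcases x with p | _ | _ <;> rfl

variable [DecidableEq P] (N : WorkflowNet P T) (k : ℕ)

def scaleNet : PetriNet (P ⊕ Bool) (T ⊕ Bool) := ⟨scalePre N k, scalePost N k⟩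

/-- Each token on `i'` stands for `k` tokens on `i`, each token on `o'` for `k` tokens on `o`. -/
def unscaleMarking (M : P ⊕ Bool → ℕ) : P → ℕ :=
  M ∘ Sum.inl + Pi.single N.ini (M (.inr false) * k) + Pi.single N.fin (M (.inr true) * k)

variable {N k}

theorem unscaleMarking_scaleMarking (m : P → ℕ) (a b : ℕ) :
    unscaleMarking N k (scaleMarking m a b) =
      m + Pi.single N.ini (a * k) + Pi.single N.fin (b * k) :=
  rfl

theorem scaleNet_step_scaleMarking {m m' : P → ℕ} (h : N.Step m m') (a b : ℕ) :
    (scaleNet N k).Step (scaleMarking m a b) (scaleMarking m' a b) := by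
  obtain ⟨t, hen, hfire⟩ := h
  refine ⟨.inl t, ?_, ?_⟩
  · rintro (p | _ | _)
    exacts [hen p, Nat.zero_le _, Nat.zero_le _]
  · rintro (p | _ | _)
    exacts [hfire p, rfl, rfl]

theorem scaleNet_reach_scaleMarking {m m' : P → ℕ} (h : N.Reach m m') (a b : ℕ) :
    (scaleNet N k).Reach (scaleMarking m a b) (scaleMarking m' a b) :=
  Relation.ReflTransGen.lift (r := N.Step) (p := (scaleNet N k).Step) (scaleMarking · a b)
    (fun _ _ hs => scaleNet_step_scaleMarking hs a b) _ _ h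

theorem scaleNet_step_ti (m : P → ℕ) (a b : ℕ) :
    (scaleNet N k).Step (scaleMarking m (a + 1) b)
      (scaleMarking (m + Pi.single N.ini k) a b) := by
  refine ⟨.inr false, ?_, ?_⟩ <;> rintro (p | _ | _)
  all_goals simp [scaleNet, scalePre, scalePost, scaleMarking, Pi.single_apply]

theorem scaleNet_step_to (m : P → ℕ) (a b : ℕ) :
    (scaleNet N k).Step (scaleMarking (m + Pi.single N.fin k) a b)
      (scaleMarking m a (b + 1)) := by
  refine ⟨.inr true, ?_, ?_⟩ <;> rintro (p | _ | _)
  all_goals simp [scaleNet, scalePre, scalePost, scaleMarking, Pi.single_apply]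

theorem scaleNet_reach_iterate_ti (m : P → ℕ) (a b j : ℕ) :
    (scaleNet N k).Reach (scaleMarking m (a + j) b)
      (scaleMarking (m + Pi.single N.ini (j * k)) a b) := by
  induction j generalizing m with
  | zero => simpa using .refl
  | succ j ih =>
    rw [Nat.succ_mul, add_comm (j * k), Pi.single_add, ← add_assoc m]
    exact .head (scaleNet_step_ti m (a + j) b) (ih _)

theorem scaleNet_reach_iterate_to (m : P → ℕ) (a b j : ℕ) :
    (scaleNet N k).Reach (scaleMarking (m + Pi.single N.fin (j * k)) a b)
      (scaleMarking m a (b + j)) := by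
  induction j generalizing b with
  | zero => simpa using .refl
  | succ j ih =>
    rw [Nat.succ_mul, Pi.single_add, ← add_assoc, add_comm j 1, ← add_assoc]
    exact .head (scaleNet_step_to _ a b) (ih _)

theorem reach_unscaleMarking_of_step {M M' : P ⊕ Bool → ℕ} (h : (scaleNet N k).Step M M') :
    N.Reach (unscaleMarking N k M) (unscaleMarking N k M') := by
  obtain ⟨t | _ | _, hen, hfire⟩ := h
  all_goals
    have hp := fun p => hfire (.inl p)
    have hi := hfire (.inr false)
    have ho := hfire (.inr true)
    simp only [scaleNet, scalePre, scalePost, Nat.sub_zero, add_zero] at hp hi ho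
  · refine .single ⟨t, fun p => ?_, fun p => ?_⟩
    · have := hen (.inl p)
      simp only [unscaleMarking, Pi.add_apply, Function.comp_apply]
      exact le_add_right (le_add_right this)
    · have := hen (.inl p)
      simp only [scaleNet, scalePre] at this
      simp only [unscaleMarking, Pi.add_apply, Function.comp_apply, hp, hi, ho]
      omega
  · have h1 := hen (.inr false)
    simp only [scaleNet, scalePre] at h1
    have hk : M (.inr false) * k = M' (.inr false) * k + k := by
      rw [hi, ← Nat.succ_mul]; congr 1; omega
    suffices e : unscaleMarking N k M' = unscaleMarking N k M by rw [e]; exact .refl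
    funext p
    simp only [unscaleMarking, Pi.add_apply, Function.comp_apply, hp, ho, hk, Pi.single_apply]
    split_ifs <;> omega
  · have h1 := hen (.inl N.fin)
    simp only [scaleNet, scalePre, if_true] at h1
    have hk : M' (.inr true) * k = M (.inr true) * k + k := by rw [ho, Nat.succ_mul]
    suffices e : unscaleMarking N k M' = unscaleMarking N k M by rw [e]; exact .refl
    funext p
    simp only [unscaleMarking, Pi.add_apply, Function.comp_apply, hp, hi, Pi.single_apply]
    rw [hk]
    split_ifs <;> subst_vars <;> omega

theorem reach_unscaleMarking {M M' : P ⊕ Bool → ℕ} (h : (scaleNet N k).Reach M M') :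
    N.Reach (unscaleMarking N k M) (unscaleMarking N k M') :=
  Relation.ReflTransGen.lift' (r := (scaleNet N k).Step) (p := N.Step) _
    (fun _ _ hs => reach_unscaleMarking_of_step hs) _ _ h

theorem scaleNet_reach_final_of_kSound (hk : 0 < k) {c : ℕ} (hN : N.KSound (c * k))
    {M : P ⊕ Bool → ℕ} (hM : (scaleNet N k).Reach (scaleMarking 0 c 0) M) :
    (scaleNet N k).Reach M (scaleMarking 0 0 c) := by
  obtain ⟨m, a, b, rfl⟩ : ∃ m a b, M = scaleMarking m a b := ⟨_, _, _, scaleMarking_eta M⟩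
  have hR : N.Reach (m + Pi.single N.ini (a * k) + Pi.single N.fin (b * k))
      (Pi.single N.fin (c * k)) := by
    have := reach_unscaleMarking hM
    rw [unscaleMarking_scaleMarking, unscaleMarking_scaleMarking] at this
    rw [← N.finM_eq_single (c * k)]
    exact hN _ (by simpa [N.iniM_eq_single] using this)
  obtain ⟨m', hm', hRm⟩ := hR.exists_eq_add_of_unconsumed fun t p hp => by
    rcases eq_or_ne p N.fin with rfl | hpf
    · exact N.no_cons_fin t
    · simp [Pi.single_eq_of_ne hpf] at hp
  obtain ⟨hbkc, rfl⟩ := Pi.le_and_eq_single_sub_of_single_eq_add hm'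
  have hbc : b ≤ c := Nat.le_of_mul_le_mul_right hbkc hk
  have hto := scaleNet_reach_iterate_to (N := N) (k := k) 0 0 b (c - b)
  rw [zero_add, Nat.sub_mul, Nat.add_sub_cancel' hbc] at hto
  rw [← zero_add a]
  exact (scaleNet_reach_iterate_ti m 0 b a).trans <|
    (scaleNet_reach_scaleMarking hRm 0 b).trans hto

theorem kSound_mul_iff_scaleNet (hk : 0 < k) (c : ℕ) :
    N.KSound (c * k) ↔ ∀ M, (scaleNet N k).Reach (scaleMarking 0 c 0) M →
      (scaleNet N k).Reach M (scaleMarking 0 0 c) := by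
  refine ⟨fun hN M hM => scaleNet_reach_final_of_kSound hk hN hM, fun h m hm => ?_⟩
  have hM : (scaleNet N k).Reach (scaleMarking 0 c 0) (scaleMarking m 0 0) := by
    rw [← zero_add c]
    refine (scaleNet_reach_iterate_ti 0 0 0 c).trans ?_
    rw [zero_add, ← N.iniM_eq_single]
    exact scaleNet_reach_scaleMarking hm 0 0
  simpa [N.finM_eq_single, unscaleMarking_scaleMarking] using reach_unscaleMarking (h _ hM)

end ScaleNet

section Scale

variable {P T : Type} [DecidableEq P]

/-- Rescaling a workflow net by `k` divides the sound numbers by `k`. -/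
theorem scale_net_sound (N : WorkflowNet P T) (k : ℕ) (hk : 0 < k)
    (N' : WorkflowNet (P ⊕ Bool) (T ⊕ Bool))
    (hini : N'.ini = Sum.inr false) (hfin : N'.fin = Sum.inr true)
    (hpre : N'.pre = scalePre N k) (hpost : N'.post = scalePost N k) :
    ∀ c : ℕ, 0 < c → (N.KSound (c * k) ↔ N'.KSound c) := by
  have hnet : N'.toPetriNet = scaleNet N k := by rw [scaleNet, ← hpre, ← hpost]
  have hiniM (c : ℕ) : N'.iniM c = scaleMarking 0 c 0 := by
    funext x; rcases x with p | _ | _ <;> simp [WorkflowNet.iniM, hini, scaleMarking]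
  have hfinM (c : ℕ) : N'.finM c = scaleMarking 0 0 c := by
    funext x; rcases x with p | _ | _ <;> simp [WorkflowNet.finM, hfin, scaleMarking]
  intro c _
  rw [kSound_mul_iff_scaleNet hk, WorkflowNet.KSound, hnet, hiniM, hfinM]

end Scale
end
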